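/- If D is a (k,λ)-list dominating set of the complement Ḡ of a graph G on n vertices, then the induced subgraph G[V \ D] has density γ satisfying (C(n-k',2) - λ/2)/C(n-k',2) ≤ γ ≤ 1 where k' = |D| ≤ k, with density defined as the ratio of the number of edges to C(|V\D|,2). -/

import Mathlib

/-! Every vertex `v ∉ D` has all but `s v` of its non-neighbours inside `D`, so it is
non-adjacent to at most `s v` other vertices of `V \ D`. By the handshake lemma in the
complement of `G[V \ D]`, at most `λ / 2` of the `C(|V \ D|, 2)` pairs of `V \ D` are
non-edges of `G`. -/

open Finset

namespace SimpleGraph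

variable {V : Type*} [Fintype V] [DecidableEq V] (G : SimpleGraph V) [DecidableRel G.Adj]

theorem card_edgeFinset_add_card_edgeFinset_compl :
    #G.edgeFinset + #Gᶜ.edgeFinset = (Fintype.card V).choose 2 := by
  rw [← card_edgeFinset_top_eq_card_choose_two, ← card_union_of_disjoint
    (disjoint_edgeFinset.mpr disjoint_compl_right), ← edgeFinset_sup]
  congr!
  exact sup_compl_eq_top

omit [Fintype V] [DecidableEq V] [DecidableRel G.Adj] in
theorem compl_induce (s : Set V) : (G.induce s)ᶜ = Gᶜ.induce s := by
  ext u v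
  simp [Subtype.ext_iff]

variable (s : Set V) [DecidablePred (· ∈ s)]

theorem card_edgeFinset_induce :
    #(G.induce s).edgeFinset = #(G.edgeFinset.filter fun e => ∀ v ∈ e, v ∈ s) := by
  rw [← card_map, map_edgeFinset_induce, ← filter_mem_eq_inter]
  congr 1
  ext e
  simp [mem_sym2_iff]

theorem two_mul_card_edgeFinset_induce :
    2 * #(G.induce s).edgeFinset = ∑ v ∈ s.toFinset, #(G.neighborFinset v ∩ s.toFinset) := by
  rw [← sum_degrees_eq_twice_card_edges, sum_subtype _ (fun _ => Set.mem_toFinset)]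
  refine sum_congr rfl fun v _ => ?_
  rw [← card_neighborFinset_eq_degree, ← card_map, map_neighborFinset_induce]

theorem card_edgeFinset_induce_add_card_edgeFinset_induce_compl :
    #(G.induce s).edgeFinset + #(Gᶜ.induce s).edgeFinset = (#s.toFinset).choose 2 := by
  rw [Set.toFinset_card, ← (G.induce s).card_edgeFinset_add_card_edgeFinset_compl,
    edgeFinset_inj.mpr (compl_induce G s).symm]

end SimpleGraph

theorem card_sdiff_le_of_tsub_le {α : Type*} [DecidableEq α] {N D : Finset α} {t : ℕ}
    (h : #N - t ≤ #(N ∩ D)) : #(N \ D) ≤ t := by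
  have := card_sdiff_add_card_inter N D
  omega

theorem sub_half_div_le_div_and_div_le_one {a b c lam : ℕ} (habc : a + b = c)
    (hb : 2 * b ≤ lam) : ((c : ℚ) - lam / 2) / c ≤ a / c ∧ (a : ℚ) / c ≤ 1 := by
  rcases Nat.eq_zero_or_pos c with rfl | hc
  · simp -- both quotients are `0` since `x / 0 = 0`
  have hc' : (0 : ℚ) < c := by exact_mod_cast hc
  have habc' : (a : ℚ) + b = c := by exact_mod_cast habc
  have hb' : 2 * (b : ℚ) ≤ lam := by exact_mod_cast hb
  constructor
  · rw [div_le_div_iff_of_pos_right hc']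
    linarith
  · rw [div_le_one hc']
    linarith

theorem stmt_4_general {V : Type*} [Fintype V] [DecidableEq V]
    (G : SimpleGraph V) [DecidableRel G.Adj]
    (s : V → ℕ) (lam : ℕ)
    (D : Finset V)
    (hdom : ∀ v, v ∉ D → Gᶜ.degree v - s v ≤ (Gᶜ.neighborFinset v ∩ D).card)
    (hsum : ∑ v ∈ Finset.univ \ D, s v ≤ lam)
    (n k' : ℕ) (hn : Fintype.card V = n) (hk' : D.card = k') :
    ((((n - k').choose 2 : ℚ) - (lam : ℚ) / 2) / ((n - k').choose 2 : ℚ) ≤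
      ((G.edgeFinset.filter (fun e => ∀ v ∈ e, v ∉ D)).card : ℚ) /
        (((Finset.univ \ D).card.choose 2 : ℚ))) ∧
    (((G.edgeFinset.filter (fun e => ∀ v ∈ e, v ∉ D)).card : ℚ) /
        (((Finset.univ \ D).card.choose 2 : ℚ)) ≤ 1) := by
  set U : Set V := (D : Set V)ᶜ
  have hU : U.toFinset = univ \ D := by simp [U, compl_eq_univ_sdiff]
  have hpairs := G.card_edgeFinset_induce_add_card_edgeFinset_induce_compl U
  have hmissing : 2 * #(Gᶜ.induce U).edgeFinset ≤ lam := by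
    rw [Gᶜ.two_mul_card_edgeFinset_induce U, hU]
    refine (sum_le_sum fun v hv => ?_).trans hsum
    rw [← compl_eq_univ_sdiff, ← sdiff_eq_inter_compl]
    exact card_sdiff_le_of_tsub_le (hdom v (mem_sdiff.mp hv).2)
  have hnk : n - k' = #(univ \ D) := by
    rw [← hn, ← hk', card_univ_sdiff]
  rw [G.card_edgeFinset_induce U, hU] at hpairs
  rw [hnk]
  exact sub_half_div_le_div_and_div_le_one hpairs hmissing

theorem stmt_4 {V : Type*} [Fintype V] [DecidableEq V]
    (G : SimpleGraph V) [DecidableRel G.Adj]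
    (s : V → ℕ) (k lam : ℕ)
    (hs : ∀ v, s v < Gᶜ.degree v)
    (D : Finset V)
    (hcard : D.card ≤ k)
    (hdom : ∀ v, v ∉ D → Gᶜ.degree v - s v ≤ (Gᶜ.neighborFinset v ∩ D).card)
    (hsum : ∑ v ∈ Finset.univ \ D, s v ≤ lam)
    (n k' : ℕ) (hn : Fintype.card V = n) (hk' : D.card = k') :
    ((((n - k').choose 2 : ℚ) - (lam : ℚ) / 2) / ((n - k').choose 2 : ℚ) ≤
      ((G.edgeFinset.filter (fun e => ∀ v ∈ e, v ∉ D)).card : ℚ) /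
        (((Finset.univ \ D).card.choose 2 : ℚ))) ∧
    (((G.edgeFinset.filter (fun e => ∀ v ∈ e, v ∉ D)).card : ℚ) /
        (((Finset.univ \ D).card.choose 2 : ℚ)) ≤ 1) :=
  stmt_4_general G s lam D hdom hsum n k' hn hk'
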